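/- arXiv:math-ph/0403030 — 3 statements merged into one kernel-verified Lean document; each statement's English description precedes it below -/
import Mathlib

section
/- (The matrix Riccati equation is solved globally by a linear flow and preserves the Siegel upper half-space.) Let d ≥ 1 and let A, D, K : ℝ → M_d(ℝ) be continuous with A(t) and D(t) symmetric for every t. Let B₀ ∈ Σ_d and let U, V : ℝ → M_d(ℂ) be the C¹ solutions of the linear system U̇(t) = −A(t)V(t) − K(t)ᵀU(t), V̇(t) = K(t)V(t) + D(t)U(t), with U(0) = B₀ and V(0) = I_d. Then for every t ∈ ℝ: (a) V(t) is invertible; (b) B(t) := U(t)V(t)^{-1} belongs to Σ_d, i.e. is complex symmetric with positive-definite imaginary part; (c) B satisfies the Riccati equation −Ḃ(t) = A(t) + K(t)ᵀB(t) + B(t)K(t) + B(t)D(t)B(t). -/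
/-!
The linear system is the linearization of a Hamiltonian flow with real coefficients, so it
preserves both the bilinear form `VᵀU - UᵀV` and the sesquilinear form `VᴴU - UᴴV`. At `t = 0`
the first vanishes because `B₀` is symmetric and the second equals `B₀ - B₀ᴴ = 2i Im B₀`.
A kernel vector `x` of `V t` would make `xᴴ (VᴴU - UᴴV) x = 0`, contradicting `Im B₀ > 0`;
the first invariant says `B = UV⁻¹` is symmetric, and the second gives
`Im B = (V⁻¹)ᴴ (Im B₀) V⁻¹ > 0`. The Riccati equation is the quotient rule for `UV⁻¹`.
-/

noncomputable section

open Matrix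

/-- Entrywise complexification of a real matrix. -/
def cmplx {m n : Type*} (M : Matrix m n ℝ) : Matrix m n ℂ := M.map Complex.ofReal

/-- Entrywise imaginary part of a complex matrix. -/
def imM {d : ℕ} (M : Matrix (Fin d) (Fin d) ℂ) : Matrix (Fin d) (Fin d) ℝ :=
  Matrix.of fun i j => (M i j).im

open scoped ComplexOrder

-- Any norm would do; the ℓ∞ operator norm makes square matrices a normed algebra, which the
-- product rule and the derivative of the inverse need.
attribute [local instance] Matrix.linftyOpNormedRing Matrix.linftyOpNormedAlgebra

section Complexification

variable {m n : Type*}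

theorem cmplx_transpose (M : Matrix m n ℝ) : (cmplx M)ᵀ = cmplx Mᵀ := rfl

theorem cmplx_conjTranspose (M : Matrix m n ℝ) : (cmplx M)ᴴ = cmplx Mᵀ := by
  ext i j
  simp [cmplx]

theorem cmplx_imM_of_isSymm {d : ℕ} {B : Matrix (Fin d) (Fin d) ℂ} (hB : B.IsSymm) :
    cmplx (imM B) = (2 * Complex.I)⁻¹ • (B - Bᴴ) := by
  ext i j
  rw [Matrix.smul_apply, Matrix.sub_apply, conjTranspose_apply, hB.apply i j, Complex.star_def,
    Complex.sub_conj, smul_eq_mul]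
  simp only [cmplx, imM, map_apply, of_apply]
  field_simp
  push_cast
  ring

theorem isHermitian_cmplx_iff {M : Matrix n n ℝ} : (cmplx M).IsHermitian ↔ M.IsHermitian := by
  simp only [IsHermitian, cmplx_conjTranspose, conjTranspose_eq_transpose_of_trivial]
  exact (Matrix.map_injective Complex.ofReal_injective).eq_iff

variable [Fintype n]

theorem re_star_dotProduct_cmplx_mulVec (M : Matrix n n ℝ) (y : n → ℂ) :
    (star y ⬝ᵥ (cmplx M *ᵥ y)).re = (fun i => (y i).re) ⬝ᵥ (M *ᵥ fun i => (y i).re)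
      + (fun i => (y i).im) ⬝ᵥ (M *ᵥ fun i => (y i).im) := by
  simp only [dotProduct, mulVec, Pi.star_apply, cmplx, map_apply, Finset.mul_sum,
    Complex.re_sum, ← Finset.sum_add_distrib]
  refine Finset.sum_congr rfl fun i _ => Finset.sum_congr rfl fun j _ => ?_
  simp only [Complex.star_def, Complex.mul_re, Complex.mul_im, Complex.conj_re,
    Complex.conj_im, Complex.ofReal_re, Complex.ofReal_im]
  ring

theorem posDef_cmplx_iff {M : Matrix n n ℝ} : (cmplx M).PosDef ↔ M.PosDef := by
  simp only [posDef_iff_dotProduct_mulVec, isHermitian_cmplx_iff]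
  refine and_congr_right fun hM => ⟨fun h x hx => ?_, fun h y hy => ?_⟩
  · have hx' : (fun i => (x i : ℂ)) ≠ 0 := fun h0 =>
      hx (funext fun i => by simpa using congrFun h0 i)
    simpa [re_star_dotProduct_cmplx_mulVec] using (Complex.lt_def.1 (h hx')).1
  · have hre : (fun i => (y i).re) ≠ 0 ∨ (fun i => (y i).im) ≠ 0 := by
      by_contra! h0
      exact hy (funext fun i => Complex.ext (congrFun h0.1 i) (congrFun h0.2 i))
    have hpos : ∀ x : n → ℝ, x ≠ 0 → 0 < x ⬝ᵥ (M *ᵥ x) := by simpa using h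
    have hnonneg (x : n → ℝ) : 0 ≤ x ⬝ᵥ (M *ᵥ x) := by
      rcases eq_or_ne x 0 with rfl | hx
      · simp
      · exact (hpos x hx).le
    refine Complex.lt_def.2 ⟨?_, ?_⟩
    · rw [re_star_dotProduct_cmplx_mulVec]
      rcases hre with h | h
      · exact add_pos_of_pos_of_nonneg (hpos _ h) (hnonneg _)
      · exact add_pos_of_nonneg_of_pos (hnonneg _) (hpos _ h)
    · exact ((isHermitian_cmplx_iff.2 hM).im_star_dotProduct_mulVec_self y).symm

end Complexification

section MatrixCalculus

variable {n : Type*} [Fintype n] {f g : ℝ → Matrix n n ℂ} {f' g' : Matrix n n ℂ}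
  {t : ℝ}

theorem hasDerivAt_matrix_iff :
    HasDerivAt f f' t ↔ ∀ i j, HasDerivAt (fun s => f s i j) (f' i j) t :=
  hasDerivAt_pi.trans (forall_congr' fun _ => hasDerivAt_pi)

theorem HasDerivAt.matrix_transpose (hf : HasDerivAt f f' t) :
    HasDerivAt (fun s => (f s)ᵀ) f'ᵀ t :=
  hasDerivAt_matrix_iff.2 fun i j => hasDerivAt_matrix_iff.1 hf j i

theorem HasDerivAt.matrix_conjTranspose (hf : HasDerivAt f f' t) :
    HasDerivAt (fun s => (f s)ᴴ) f'ᴴ t :=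
  hasDerivAt_matrix_iff.2 fun i j => (hasDerivAt_matrix_iff.1 hf j i).star

theorem HasDerivAt.matrix_inv [DecidableEq n] (hg : HasDerivAt g g' t) (hgt : IsUnit (g t)) :
    HasDerivAt (fun s => (g s)⁻¹) (-((g t)⁻¹ * g' * (g t)⁻¹)) t := by
  obtain ⟨u, hu⟩ := hgt
  have hinv := (hu ▸ hasFDerivAt_ringInverse (𝕜 := ℝ) u).comp_hasDerivAt t hg
  rw [show Ring.inverse ∘ g = fun s => (g s)⁻¹ from
    funext fun s => (nonsing_inv_eq_ringInverse (g s)).symm] at hinv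
  refine hinv.congr_deriv ?_
  rw [← hu, ← coe_units_inv]
  simp [mul_assoc]

end MatrixCalculus

section MatrixAlgebra

variable {n R : Type*} [Fintype n] [DecidableEq n] {U V : Matrix n n R}

theorem isSymm_mul_nonsing_inv [CommRing R] (hV : IsUnit V.det) (h : Vᵀ * U = Uᵀ * V) :
    (U * V⁻¹).IsSymm := by
  have hUT : Uᵀ = Vᵀ * (U * V⁻¹) := by
    rw [← mul_assoc, h, mul_assoc, mul_nonsing_inv _ hV, mul_one]
  rw [IsSymm, transpose_mul, transpose_nonsing_inv, hUT, ← mul_assoc,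
    nonsing_inv_mul _ (by rwa [det_transpose]), one_mul]

theorem mul_nonsing_inv_sub_conjTranspose [CommRing R] [StarRing R] (hV : IsUnit V.det) :
    U * V⁻¹ - (U * V⁻¹)ᴴ = (V⁻¹)ᴴ * (Vᴴ * U - Uᴴ * V) * V⁻¹ := by
  have hVH : (V⁻¹)ᴴ * Vᴴ = 1 := by
    rw [← conjTranspose_mul, mul_nonsing_inv _ hV, conjTranspose_one]
  rw [Matrix.mul_sub, Matrix.sub_mul, ← mul_assoc, hVH, one_mul, conjTranspose_mul, mul_assoc,
    mul_assoc, mul_nonsing_inv _ hV, mul_one]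

theorem isUnit_of_posDef_smul_conjTranspose_mul_sub [Field R] [PartialOrder R] [StarRing R]
    {c : R} (h : (c • (Vᴴ * U - Uᴴ * V)).PosDef) : IsUnit V := by
  rw [isUnit_iff_isUnit_det, isUnit_iff_ne_zero]
  intro hdet
  obtain ⟨x, hx, hVx⟩ := exists_mulVec_eq_zero_iff.2 hdet
  have hform : star x ⬝ᵥ ((c • (Vᴴ * U - Uᴴ * V)) *ᵥ x) = 0 := by
    rw [smul_mulVec, sub_mulVec, ← mulVec_mulVec, ← mulVec_mulVec, hVx, mulVec_zero,
      sub_zero, dotProduct_smul, dotProduct_mulVec, ← star_mulVec, hVx]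
    simp
  exact (h.dotProduct_mulVec_pos hx).ne' hform

end MatrixAlgebra

section LinearFlow

variable {n : Type*} [Fintype n] {A K D : ℝ → Matrix n n ℝ} {U V : ℝ → Matrix n n ℂ}

def IsLinearizedFlow (A K D : ℝ → Matrix n n ℝ) (U V : ℝ → Matrix n n ℂ) : Prop :=
  ∀ t, HasDerivAt U (-cmplx (A t) * V t - (cmplx (K t))ᵀ * U t) t ∧
    HasDerivAt V (cmplx (K t) * V t + cmplx (D t) * U t) t

theorem IsLinearizedFlow.transpose_form_eq [DecidableEq n] (hf : IsLinearizedFlow A K D U V)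
    (hA : ∀ t, (A t).IsSymm) (hD : ∀ t, (D t).IsSymm) (t s : ℝ) :
    (V t)ᵀ * U t - (U t)ᵀ * V t = (V s)ᵀ * U s - (U s)ᵀ * V s := by
  have hderiv (r : ℝ) : HasDerivAt (fun r => (V r)ᵀ * U r - (U r)ᵀ * V r) 0 r := by
    obtain ⟨hU, hV⟩ := hf r
    refine ((hV.matrix_transpose.mul hU).sub (hU.matrix_transpose.mul hV)).congr_deriv ?_
    simp only [transpose_add, transpose_sub, transpose_neg, transpose_mul, transpose_transpose,
      cmplx_transpose, (hA r).eq, (hD r).eq]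
    noncomm_ring
  exact is_const_of_deriv_eq_zero (fun r => (hderiv r).differentiableAt)
    (fun r => (hderiv r).deriv) t s

theorem IsLinearizedFlow.conjTranspose_form_eq [DecidableEq n] (hf : IsLinearizedFlow A K D U V)
    (hA : ∀ t, (A t).IsSymm) (hD : ∀ t, (D t).IsSymm) (t s : ℝ) :
    (V t)ᴴ * U t - (U t)ᴴ * V t = (V s)ᴴ * U s - (U s)ᴴ * V s := by
  have hderiv (r : ℝ) : HasDerivAt (fun r => (V r)ᴴ * U r - (U r)ᴴ * V r) 0 r := by
    obtain ⟨hU, hV⟩ := hf r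
    refine ((hV.matrix_conjTranspose.mul hU).sub
      (hU.matrix_conjTranspose.mul hV)).congr_deriv ?_
    simp only [conjTranspose_add, conjTranspose_sub, conjTranspose_neg, conjTranspose_mul,
      cmplx_transpose, cmplx_conjTranspose, transpose_transpose, (hA r).eq, (hD r).eq]
    noncomm_ring
  exact is_const_of_deriv_eq_zero (fun r => (hderiv r).differentiableAt)
    (fun r => (hderiv r).deriv) t s

theorem IsLinearizedFlow.hasDerivAt_mul_inv [DecidableEq n] (hf : IsLinearizedFlow A K D U V)
    {t : ℝ} (hV : IsUnit (V t)) :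
    HasDerivAt (fun s => U s * (V s)⁻¹)
      (-(cmplx (A t) + (cmplx (K t))ᵀ * (U t * (V t)⁻¹) + U t * (V t)⁻¹ * cmplx (K t) +
        U t * (V t)⁻¹ * cmplx (D t) * (U t * (V t)⁻¹))) t := by
  refine ((hf t).1.mul ((hf t).2.matrix_inv hV)).congr_deriv ?_
  have hVV : V t * (V t)⁻¹ = 1 := mul_nonsing_inv _ ((isUnit_iff_isUnit_det _).1 hV)
  simp only [mul_add, add_mul, sub_mul, mul_neg, neg_mul, mul_assoc, hVV, mul_one]
  abel

end LinearFlow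

theorem riccati_global_general (d : ℕ)
    (A D K : ℝ → Matrix (Fin d) (Fin d) ℝ)
    (hAsymm : ∀ t, (A t).IsSymm) (hDsymm : ∀ t, (D t).IsSymm)
    (B₀ : Matrix (Fin d) (Fin d) ℂ) (hB₀symm : B₀.IsSymm) (hB₀pos : (imM B₀).PosDef)
    (U V : ℝ → Matrix (Fin d) (Fin d) ℂ)
    (hU0 : U 0 = B₀) (hV0 : V 0 = 1)
    (hUderiv : ∀ t i j, HasDerivAt (fun s => U s i j)
      ((-(cmplx (A t)) * V t - (cmplx (K t))ᵀ * U t) i j) t)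
    (hVderiv : ∀ t i j, HasDerivAt (fun s => V s i j)
      ((cmplx (K t) * V t + cmplx (D t) * U t) i j) t) :
    ∀ t : ℝ,
      IsUnit (V t) ∧
      (U t * (V t)⁻¹).IsSymm ∧
      (imM (U t * (V t)⁻¹)).PosDef ∧
      ∀ i j, HasDerivAt (fun s => (U s * (V s)⁻¹) i j)
        ((-(cmplx (A t) + (cmplx (K t))ᵀ * (U t * (V t)⁻¹) + (U t * (V t)⁻¹) * cmplx (K t) +
            (U t * (V t)⁻¹) * cmplx (D t) * (U t * (V t)⁻¹))) i j) t := by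
  have hf : IsLinearizedFlow A K D U V := fun t =>
    ⟨hasDerivAt_matrix_iff.2 (hUderiv t), hasDerivAt_matrix_iff.2 (hVderiv t)⟩
  have hT (t : ℝ) : (V t)ᵀ * U t = (U t)ᵀ * V t := by
    refine sub_eq_zero.1 ?_
    simpa [hU0, hV0, hB₀symm.eq] using hf.transpose_form_eq hAsymm hDsymm t 0
  have hH (t : ℝ) : (V t)ᴴ * U t - (U t)ᴴ * V t = B₀ - B₀ᴴ := by
    simpa [hU0, hV0] using hf.conjTranspose_form_eq hAsymm hDsymm t 0
  have hP : ((2 * Complex.I)⁻¹ • (B₀ - B₀ᴴ)).PosDef := by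
    rwa [← cmplx_imM_of_isSymm hB₀symm, posDef_cmplx_iff]
  intro t
  have hV : IsUnit (V t) := isUnit_of_posDef_smul_conjTranspose_mul_sub (hH t ▸ hP)
  have hVdet : IsUnit (V t).det := (isUnit_iff_isUnit_det _).1 hV
  have hB : (U t * (V t)⁻¹).IsSymm := isSymm_mul_nonsing_inv hVdet (hT t)
  refine ⟨hV, hB, ?_, hasDerivAt_matrix_iff.1 (hf.hasDerivAt_mul_inv hV)⟩
  rw [← posDef_cmplx_iff, cmplx_imM_of_isSymm hB, mul_nonsing_inv_sub_conjTranspose hVdet, hH t,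
    ← smul_mul_assoc, ← mul_smul_comm, ← star_eq_conjTranspose]
  exact (isUnit_nonsing_inv_iff.2 hV).posDef_star_left_conjugate_iff.2 hP

/-- The matrix Riccati equation is solved globally by a linear flow and
preserves the Siegel upper half-space: if `U̇ = −A V − Kᵀ U`, `V̇ = K V + D U` with
`U(0) = B₀ ∈ Σ_d`, `V(0) = 1`, then `V(t)` is invertible, `B(t) = U(t)V(t)⁻¹ ∈ Σ_d`, and
`−Ḃ = A + KᵀB + BK + BDB`. -/
theorem riccati_global (d : ℕ) (hd : 1 ≤ d)
    (A D K : ℝ → Matrix (Fin d) (Fin d) ℝ)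
    (hAcont : ∀ i j, Continuous fun t => A t i j)
    (hDcont : ∀ i j, Continuous fun t => D t i j)
    (hKcont : ∀ i j, Continuous fun t => K t i j)
    (hAsymm : ∀ t, (A t).IsSymm) (hDsymm : ∀ t, (D t).IsSymm)
    (B₀ : Matrix (Fin d) (Fin d) ℂ) (hB₀symm : B₀.IsSymm) (hB₀pos : (imM B₀).PosDef)
    (U V : ℝ → Matrix (Fin d) (Fin d) ℂ)
    (hU0 : U 0 = B₀) (hV0 : V 0 = 1)
    (hUderiv : ∀ t i j, HasDerivAt (fun s => U s i j)
      ((-(cmplx (A t)) * V t - (cmplx (K t))ᵀ * U t) i j) t)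
    (hVderiv : ∀ t i j, HasDerivAt (fun s => V s i j)
      ((cmplx (K t) * V t + cmplx (D t) * U t) i j) t) :
    ∀ t : ℝ,
      IsUnit (V t) ∧
      (U t * (V t)⁻¹).IsSymm ∧
      (imM (U t * (V t)⁻¹)).PosDef ∧
      ∀ i j, HasDerivAt (fun s => (U s * (V s)⁻¹) i j)
        ((-(cmplx (A t) + (cmplx (K t))ᵀ * (U t * (V t)⁻¹) + (U t * (V t)⁻¹) * cmplx (K t) +
            (U t * (V t)⁻¹) * cmplx (D t) * (U t * (V t)⁻¹))) i j) t :=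
  riccati_global_general d A D K hAsymm hDsymm B₀ hB₀symm hB₀pos U V hU0 hV0 hUderiv hVderiv
end
end

section
/- (Wigner transform of a coherent state is a Gaussian with width matrix G_B.) Let d ≥ 1, ℏ > 0, (q,p) ∈ ℝ^d × ℝ^d, and let B be a complex symmetric d×d matrix with positive-definite imaginary part. Then for every (x,ξ) ∈ ℝ^d × ℝ^d, ∫_{ℝ^d} e^{−iξ·y/ℏ} conj(φ^B_{(q,p)}(x − y/2)) φ^B_{(q,p)}(x + y/2) dy = 2^d exp(−(1/ℏ)((x,ξ)−(q,p))·G_B((x,ξ)−(q,p))). -/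
noncomputable section

open Matrix MeasureTheory

/-- Entrywise real part of a complex matrix. -/
def reM {d : ℕ} (M : Matrix (Fin d) (Fin d) ℂ) : Matrix (Fin d) (Fin d) ℝ :=
  Matrix.of fun i j => (M i j).re

/-- The width matrix `G_B`. -/
def GB {d : ℕ} (B : Matrix (Fin d) (Fin d) ℂ) :
    Matrix (Fin d ⊕ Fin d) (Fin d ⊕ Fin d) ℝ :=
  Matrix.fromBlocks (imM B + reM B * (imM B)⁻¹ * reM B) (-(reM B * (imM B)⁻¹))
    (-((imM B)⁻¹ * reM B)) (imM B)⁻¹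

/-- The coherent state `φ^B_{(q,p)}` of the Heisenberg group. -/
def cohState (d : ℕ) (ℏ : ℝ) (q p : Fin d → ℝ) (B : Matrix (Fin d) (Fin d) ℂ)
    (x : Fin d → ℝ) : ℂ :=
  (((Real.pi * ℏ) ^ (-(d : ℝ) / 4) : ℝ) : ℂ) * (((imM B).det ^ ((1 : ℝ) / 4) : ℝ) : ℂ) *
    Complex.exp ((Complex.I / (ℏ : ℂ)) *
      ((((∑ j, p j * (x j - q j)) : ℝ) : ℂ) +
        (1 / 2 : ℂ) * ∑ j, ∑ k, ((x j - q j : ℝ) : ℂ) * B j k * ((x k - q k : ℝ) : ℂ)))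

/-!
Write `B = R + iA`, `u = x - q` and `v = ξ - p`. In `conj φ(x - y/2) · φ(x + y/2)` the part of the
phase that is quadratic in `y` and comes from `R` cancels, so the integrand is
`(πℏ)^{-d/2} √(det A) e^{-u·Au/ℏ}` times the Gaussian `exp(-y·Ay/(4ℏ) + i (Ru - v)·y/ℏ)`.
Substituting `y = S⁻¹z` for a factorisation `A = SᵀS` reduces its integral to the standard one,
`(4πℏ)^{d/2} (det A)^{-1/2} e^{-(Ru - v)·A⁻¹(Ru - v)/ℏ}`, and
`u·Au + (Ru - v)·A⁻¹(Ru - v)` is the quadratic form of `G_B` at `(u, v)`.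
-/

open Complex

namespace Matrix

variable {ι : Type*} [Fintype ι]

theorem transpose_mul_self_dotProduct_mulVec {R : Type*} [CommSemiring R]
    (S : Matrix ι ι R) (y : ι → R) :
    y ⬝ᵥ (Sᵀ * S) *ᵥ y = (S *ᵥ y) ⬝ᵥ (S *ᵥ y) := by
  rw [← mulVec_mulVec, dotProduct_mulVec, vecMul_transpose]

theorem IsSymm.mulVec_dotProduct {R : Type*} [CommSemiring R] {M : Matrix ι ι R}
    (hM : M.IsSymm) (u v : ι → R) : (M *ᵥ u) ⬝ᵥ v = u ⬝ᵥ M *ᵥ v := by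
  rw [← vecMul_transpose, hM.eq, ← dotProduct_mulVec]

theorem IsSymm.add_smul_dotProduct_mulVec_add_smul {R : Type*} [CommRing R] {M : Matrix ι ι R}
    (hM : M.IsSymm) (u v : ι → R) (c : R) :
    (u + c • v) ⬝ᵥ M *ᵥ (u + c • v) =
      u ⬝ᵥ M *ᵥ u + 2 * c * (u ⬝ᵥ M *ᵥ v) + c ^ 2 * (v ⬝ᵥ M *ᵥ v) := by
  have hvu : v ⬝ᵥ M *ᵥ u = u ⬝ᵥ M *ᵥ v := by rw [← hM.mulVec_dotProduct, dotProduct_comm]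
  simp only [dotProduct_add, add_dotProduct, mulVec_add, mulVec_smul, dotProduct_smul,
    smul_dotProduct, smul_eq_mul, hvu]
  ring

variable [DecidableEq ι]

open scoped MatrixOrder in
theorem PosSemidef.exists_eq_transpose_mul_self {A : Matrix ι ι ℝ} (hA : A.PosSemidef) :
    ∃ S : Matrix ι ι ℝ, A = Sᵀ * S := by
  obtain ⟨S, hS⟩ := CStarAlgebra.nonneg_iff_eq_star_mul_self.mp hA.nonneg
  exact ⟨S, by rw [hS, star_eq_conjTranspose, conjTranspose_eq_transpose_of_trivial]⟩

theorem integral_comp_mulVec {E : Type*} [NormedAddCommGroup E] [NormedSpace ℝ E]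
    {S : Matrix ι ι ℝ} (hS : S.det ≠ 0) (g : (ι → ℝ) → E) :
    ∫ y, g (S *ᵥ y) = |S.det|⁻¹ • ∫ z, g z := by
  have hemb : MeasurableEmbedding (toLin' S) :=
    (LinearMap.isClosedEmbedding_of_injective
      (ker_toLin'_eq_bot_iff.mpr fun _ => eq_zero_of_mulVec_eq_zero hS)).measurableEmbedding
  rw [← abs_inv, ← ENNReal.toReal_ofReal (abs_nonneg _), ← integral_smul_measure,
    ← Real.map_matrix_volume_pi_eq_smul_volume_pi hS, hemb.integral_map]
  rfl

end Matrix

theorem integral_cexp_neg_mul_dotProduct_mulVec_add {ι : Type*} [Fintype ι] [DecidableEq ι]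
    {A : Matrix ι ι ℝ} (hA : A.PosDef) {b : ℂ} (hb : 0 < b.re) (c : ℂ) (w : ι → ℝ) :
    ∫ y : ι → ℝ, cexp (-b * (y ⬝ᵥ A *ᵥ y : ℝ) + c * (w ⬝ᵥ y : ℝ)) =
      (Real.pi / b) ^ (Fintype.card ι / 2 : ℂ) / (√A.det : ℝ) *
        cexp (c ^ 2 * (w ⬝ᵥ A⁻¹ *ᵥ w : ℝ) / (4 * b)) := by
  obtain ⟨S, rfl⟩ := hA.posSemidef.exists_eq_transpose_mul_self
  have hS : S.det ≠ 0 := fun h => by simpa [det_mul, h] using hA.det_pos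
  set n := S⁻¹ᵀ *ᵥ w
  have hquad : ∀ z, S⁻¹ *ᵥ z ⬝ᵥ (Sᵀ * S) *ᵥ (S⁻¹ *ᵥ z) = z ⬝ᵥ z := fun z => by
    rw [transpose_mul_self_dotProduct_mulVec, mulVec_mulVec, mul_nonsing_inv _ hS.isUnit,
      one_mulVec]
  have hlin : ∀ z, w ⬝ᵥ S⁻¹ *ᵥ z = n ⬝ᵥ z := fun z => by
    rw [dotProduct_mulVec, ← mulVec_transpose]
  have hnn : n ⬝ᵥ n = w ⬝ᵥ (Sᵀ * S)⁻¹ *ᵥ w := by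
    have := transpose_mul_self_dotProduct_mulVec S⁻¹ᵀ w
    rw [transpose_transpose] at this
    rw [Matrix.mul_inv_rev, ← transpose_nonsing_inv, this]
  have hsqrt : √(Sᵀ * S).det = |S.det| := by
    rw [det_mul, det_transpose, Real.sqrt_mul_self_eq_abs]
  calc ∫ y : ι → ℝ, cexp (-b * (y ⬝ᵥ (Sᵀ * S) *ᵥ y : ℝ) + c * (w ⬝ᵥ y : ℝ))
      = ∫ y : ι → ℝ, cexp (-b * (S⁻¹ *ᵥ (S *ᵥ y) ⬝ᵥ (Sᵀ * S) *ᵥ (S⁻¹ *ᵥ (S *ᵥ y)) : ℝ)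
          + c * (w ⬝ᵥ S⁻¹ *ᵥ (S *ᵥ y) : ℝ)) := by
        simp only [mulVec_mulVec, nonsing_inv_mul _ hS.isUnit, one_mulVec]
    _ = |S.det|⁻¹ • ∫ z : ι → ℝ, cexp (-b * ∑ i, (z i : ℂ) ^ 2 + ∑ i, c * n i * z i) := by
        rw [integral_comp_mulVec hS (fun z => cexp (-b * (S⁻¹ *ᵥ z ⬝ᵥ (Sᵀ * S) *ᵥ (S⁻¹ *ᵥ z) : ℝ)
          + c * (w ⬝ᵥ S⁻¹ *ᵥ z : ℝ)))]
        simp only [hquad, hlin]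
        simp only [dotProduct, ofReal_sum, ofReal_mul, Finset.mul_sum, sq, mul_assoc]
    _ = _ := by
        have hsum : ∑ i, (c * n i) ^ 2 = c ^ 2 * (n ⬝ᵥ n : ℝ) := by
          simp only [dotProduct, ofReal_sum, ofReal_mul, Finset.mul_sum]
          exact Finset.sum_congr rfl fun i _ => by ring
        rw [GaussianFourier.integral_cexp_neg_mul_sum_add hb, hsqrt, real_smul, ← hnn, hsum,
          ofReal_inv, inv_mul_eq_div, div_mul_eq_mul_div]

theorem integral_cexp_neg_inv_four_mul_dotProduct_mulVec_add_I_div {ι : Type*} [Fintype ι]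
    [DecidableEq ι] {ℏ : ℝ} (hℏ : 0 < ℏ) {A : Matrix ι ι ℝ} (hA : A.PosDef) (w : ι → ℝ) :
    ∫ y : ι → ℝ, cexp (-(4 * ℏ : ℂ)⁻¹ * (y ⬝ᵥ A *ᵥ y : ℝ) + I / ℏ * (w ⬝ᵥ y : ℝ)) =
      ((4 * Real.pi * ℏ) ^ ((Fintype.card ι : ℝ) / 2) / √A.det : ℝ) *
        cexp (-(w ⬝ᵥ A⁻¹ *ᵥ w : ℝ) / ℏ) := by
  have hℏ' : (ℏ : ℂ) ≠ 0 := ofReal_ne_zero.mpr hℏ.ne'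
  have hb : 0 < ((4 * ℏ : ℂ)⁻¹).re := by
    rw [← ofReal_ofNat, ← ofReal_mul, ← ofReal_inv, ofReal_re]; positivity
  have hmass : (Real.pi / (4 * ℏ : ℂ)⁻¹) ^ (Fintype.card ι / 2 : ℂ) =
      ((4 * Real.pi * ℏ) ^ ((Fintype.card ι : ℝ) / 2) : ℝ) := by
    rw [div_inv_eq_mul, ofReal_cpow (by positivity)]
    push_cast
    ring_nf
  have hexp : (I / ℏ) ^ 2 * (w ⬝ᵥ A⁻¹ *ᵥ w : ℝ) / (4 * (4 * ℏ : ℂ)⁻¹) =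
      -(w ⬝ᵥ A⁻¹ *ᵥ w : ℝ) / ℏ := by
    field_simp
    rw [I_sq]
    ring
  rw [integral_cexp_neg_mul_dotProduct_mulVec_add hA hb, hmass, hexp, ofReal_div]

section CoherentState

variable {d : ℕ}

theorem Matrix.IsSymm.reM {B : Matrix (Fin d) (Fin d) ℂ} (hB : B.IsSymm) : (reM B).IsSymm :=
  IsSymm.ext fun i j => by simp only [_root_.reM, of_apply, hB.apply i j]

theorem Matrix.IsSymm.imM {B : Matrix (Fin d) (Fin d) ℂ} (hB : B.IsSymm) : (imM B).IsSymm :=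
  IsSymm.ext fun i j => by simp only [_root_.imM, of_apply, hB.apply i j]

theorem sum_sum_mul_mul_eq_reM_add_imM (B : Matrix (Fin d) (Fin d) ℂ) (a : Fin d → ℝ) :
    ∑ j, ∑ k, (a j : ℂ) * B j k * (a k : ℂ) =
      (a ⬝ᵥ reM B *ᵥ a : ℝ) + (a ⬝ᵥ imM B *ᵥ a : ℝ) * I := by
  simp only [dotProduct, mulVec, reM, imM, of_apply, ofReal_sum, ofReal_mul, Finset.mul_sum,
    Finset.sum_mul, ← Finset.sum_add_distrib]
  refine Finset.sum_congr rfl fun j _ => Finset.sum_congr rfl fun k _ => ?_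
  conv_lhs => rw [← re_add_im (B j k)]
  ring

def cohNorm (d : ℕ) (ℏ D : ℝ) : ℝ :=
  (Real.pi * ℏ) ^ (-(d : ℝ) / 4) * D ^ ((1 : ℝ) / 4)

theorem cohState_eq (ℏ : ℝ) (q p : Fin d → ℝ) (B : Matrix (Fin d) (Fin d) ℂ) (x : Fin d → ℝ) :
    cohState d ℏ q p B x = (cohNorm d ℏ (imM B).det : ℂ) *
      cexp (I / ℏ * ((p ⬝ᵥ (x - q) : ℝ) +
        1 / 2 * (((x - q) ⬝ᵥ reM B *ᵥ (x - q) : ℝ) + ((x - q) ⬝ᵥ imM B *ᵥ (x - q) : ℝ) * I))) := by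
  rw [cohState, cohNorm, ofReal_mul, ← sum_sum_mul_mul_eq_reM_add_imM]
  rfl

theorem sq_cohNorm_mul_rpow {ℏ D : ℝ} (hℏ : 0 < ℏ) (hD : 0 < D) :
    cohNorm d ℏ D ^ 2 * (4 * Real.pi * ℏ) ^ ((d : ℝ) / 2) = 2 ^ d * √D := by
  have hP : 0 < Real.pi * ℏ := by positivity
  have hsqrt : (D ^ ((1 : ℝ) / 4)) ^ 2 = √D := by
    rw [← Real.rpow_natCast, ← Real.rpow_mul hD.le, Real.sqrt_eq_rpow]; norm_num
  have hfour : (4 : ℝ) ^ ((d : ℝ) / 2) = 2 ^ d := by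
    rw [show (4 : ℝ) = 2 ^ (2 : ℝ) by norm_num, ← Real.rpow_mul (by norm_num),
      show (2 : ℝ) * (d / 2) = d by ring, Real.rpow_natCast]
  have hcancel : ((Real.pi * ℏ) ^ (-(d : ℝ) / 4)) ^ 2 * (Real.pi * ℏ) ^ ((d : ℝ) / 2) = 1 := by
    rw [← Real.rpow_natCast, ← Real.rpow_mul hP.le, ← Real.rpow_add hP,
      show -(d : ℝ) / 4 * (2 : ℕ) + d / 2 = 0 by push_cast; ring, Real.rpow_zero]
  rw [cohNorm, mul_pow, hsqrt, mul_assoc 4, Real.mul_rpow (by norm_num) hP.le, hfour]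
  linear_combination 2 ^ d * √D * hcancel

theorem sumElim_dotProduct_GB_mulVec {B : Matrix (Fin d) (Fin d) ℂ} (hB : B.IsSymm)
    (u v : Fin d → ℝ) :
    Sum.elim u v ⬝ᵥ GB B *ᵥ Sum.elim u v =
      u ⬝ᵥ imM B *ᵥ u + (reM B *ᵥ u - v) ⬝ᵥ (imM B)⁻¹ *ᵥ (reM B *ᵥ u - v) := by
  simp only [GB, fromBlocks_mulVec, Sum.elim_comp_inl, Sum.elim_comp_inr,
    sumElim_dotProduct_sumElim, add_mulVec, neg_mulVec,
    ← mulVec_mulVec, dotProduct_add, dotProduct_neg, mulVec_sub, sub_dotProduct, dotProduct_sub,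
    hB.reM.mulVec_dotProduct]
  ring

theorem wigner_integrand_cohState_eq (ℏ : ℝ) (q p : Fin d → ℝ) {B : Matrix (Fin d) (Fin d) ℂ}
    (hB : B.IsSymm) (x ξ y : Fin d → ℝ) :
    cexp (-(I * ((∑ j, ξ j * y j : ℝ) : ℂ)) / ℏ) *
        (starRingEnd ℂ) (cohState d ℏ q p B (fun j => x j - y j / 2)) *
        cohState d ℏ q p B (fun j => x j + y j / 2) =
      (cohNorm d ℏ (imM B).det ^ 2 : ℝ) * cexp (-((x - q) ⬝ᵥ imM B *ᵥ (x - q) : ℝ) / ℏ) *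
        cexp (-(4 * ℏ : ℂ)⁻¹ * (y ⬝ᵥ imM B *ᵥ y : ℝ) +
          I / ℏ * ((reM B *ᵥ (x - q) - (ξ - p)) ⬝ᵥ y : ℝ)) := by
  have hminus : (fun j => x j - y j / 2) - q = x - q + (-2⁻¹ : ℝ) • y := by
    funext j; simp only [Pi.sub_apply, Pi.add_apply, Pi.smul_apply, smul_eq_mul]; ring
  have hplus : (fun j => x j + y j / 2) - q = x - q + (2⁻¹ : ℝ) • y := by
    funext j; simp only [Pi.sub_apply, Pi.add_apply, Pi.smul_apply, smul_eq_mul]; ring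
  have hcombine : ∀ k a b c : ℂ, cexp a * (k * cexp b) * (k * cexp c) = k ^ 2 * cexp (a + b + c) :=
    fun k a b c => by rw [exp_add, exp_add]; ring
  have hξ : ∑ j, ξ j * y j = ξ ⬝ᵥ y := rfl
  rw [hξ, cohState_eq, cohState_eq, hminus, hplus, map_mul, conj_ofReal, ← exp_conj, hcombine,
    mul_assoc, ← exp_add, ofReal_pow]
  congr 2
  simp only [hB.reM.add_smul_dotProduct_mulVec_add_smul, hB.imM.add_smul_dotProduct_mulVec_add_smul,
    dotProduct_add, dotProduct_smul, sub_dotProduct _ _ y, hB.reM.mulVec_dotProduct, smul_eq_mul,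
    map_add, map_mul, map_div₀, conj_ofReal, conj_I, map_one, map_ofNat]
  push_cast
  linear_combination ((((x - q) ⬝ᵥ imM B *ᵥ (x - q) : ℝ) : ℂ) / ℏ +
    ((y ⬝ᵥ imM B *ᵥ y : ℝ) : ℂ) / (4 * ℏ)) * I_sq

end CoherentState

theorem wigner_cohState_general (d : ℕ) (ℏ : ℝ) (hℏ : 0 < ℏ)
    (q p : Fin d → ℝ) (B : Matrix (Fin d) (Fin d) ℂ)
    (hBsymm : B.IsSymm) (hBpos : (imM B).PosDef) (x ξ : Fin d → ℝ) :
    (∫ y : Fin d → ℝ,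
        Complex.exp (-(Complex.I * (((∑ j, ξ j * y j) : ℝ) : ℂ)) / (ℏ : ℂ)) *
          (starRingEnd ℂ) (cohState d ℏ q p B (fun j => x j - y j / 2)) *
          cohState d ℏ q p B (fun j => x j + y j / 2)) =
      (2 : ℂ) ^ d *
        Complex.exp
          (-(((Sum.elim (fun j => x j - q j) (fun j => ξ j - p j) ⬝ᵥ
                (GB B).mulVec (Sum.elim (fun j => x j - q j) (fun j => ξ j - p j))) : ℝ) : ℂ) /
            (ℏ : ℂ)) := by
  have hu : (fun j => x j - q j) = x - q := rfl
  have hv : (fun j => ξ j - p j) = ξ - p := rfl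
  have hnorm : cohNorm d ℏ (imM B).det ^ 2 * ((4 * Real.pi * ℏ) ^ ((d : ℝ) / 2) / √(imM B).det) =
      2 ^ d := by
    rw [← mul_div_assoc, sq_cohNorm_mul_rpow hℏ hBpos.det_pos,
      mul_div_cancel_right₀ _ (Real.sqrt_pos.mpr hBpos.det_pos).ne']
  simp only [wigner_integrand_cohState_eq ℏ q p hBsymm]
  rw [integral_const_mul, integral_cexp_neg_inv_four_mul_dotProduct_mulVec_add_I_div hℏ hBpos,
    hu, hv, sumElim_dotProduct_GB_mulVec hBsymm, Fintype.card_fin, ofReal_add, neg_add, add_div,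
    exp_add]
  rw [← ofReal_ofNat, ← ofReal_pow, ← hnorm]
  push_cast
  ring

/-- The Wigner transform of the coherent state `φ^B_{(q,p)}` is the Gaussian
`2^d exp(−((x,ξ)−(q,p))·G_B((x,ξ)−(q,p))/ℏ)` on phase space. -/
theorem wigner_cohState (d : ℕ) (hd : 1 ≤ d) (ℏ : ℝ) (hℏ : 0 < ℏ)
    (q p : Fin d → ℝ) (B : Matrix (Fin d) (Fin d) ℂ)
    (hBsymm : B.IsSymm) (hBpos : (imM B).PosDef) (x ξ : Fin d → ℝ) :
    (∫ y : Fin d → ℝ,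
        Complex.exp (-(Complex.I * (((∑ j, ξ j * y j) : ℝ) : ℂ)) / (ℏ : ℂ)) *
          (starRingEnd ℂ) (cohState d ℏ q p B (fun j => x j - y j / 2)) *
          cohState d ℏ q p B (fun j => x j + y j / 2)) =
      (2 : ℂ) ^ d *
        Complex.exp
          (-(((Sum.elim (fun j => x j - q j) (fun j => ξ j - p j) ⬝ᵥ
                (GB B).mulVec (Sum.elim (fun j => x j - q j) (fun j => ξ j - p j))) : ℝ) : ℂ) /
            (ℏ : ℂ)) :=
  wigner_cohState_general d ℏ hℏ q p B hBsymm hBpos x ξ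
end
end

section
/- (Explicit phase of the propagated spin-coherent state; spin-1/2 case, equation (deltaoft).) Let C : ℝ → ℝ³ be continuous and let θ, φ : ℝ → ℝ be C¹ with θ(t) ∈ (0,π) for all t, such that the curve n(t) := (sin θ(t) cos φ(t), sin θ(t) sin φ(t), cos θ(t)) satisfies the precession equation ṅ(t) = C(t) × n(t). Define ρ(t) := −∫₀ᵗ (C(t′)·n(t′) + (1 − cos θ(t′)) φ̇(t′)) dt′. Then the ℂ²-valued curve χ(t) := (cos(θ(t)/2) e^{iρ(t)/2}, sin(θ(t)/2) e^{i(φ(t)+ρ(t)/2)}) satisfies the spin-1/2 Schrödinger equation i χ̇(t) = (1/2)(C(t)·σ) χ(t). Equivalently, the quantum evolution of the spin-coherent state φ_{n(0)} equals e^{iρ(t)/2} φ_{n(t)}, i.e. the classically transported coherent state up to the phase ρ(t)/2. -/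
noncomputable section

open Matrix

/-- The Pauli matrices. -/
def sigma1 : Matrix (Fin 2) (Fin 2) ℂ := !![0, 1; 1, 0]
def sigma2 : Matrix (Fin 2) (Fin 2) ℂ := !![0, -Complex.I; Complex.I, 0]
def sigma3 : Matrix (Fin 2) (Fin 2) ℂ := !![1, 0; 0, -1]

/-- For `v ∈ ℝ³`, `v·σ = v₁σ₁ + v₂σ₂ + v₃σ₃`. -/
def dotSigma (v : Fin 3 → ℝ) : Matrix (Fin 2) (Fin 2) ℂ :=
  (v 0 : ℂ) • sigma1 + (v 1 : ℂ) • sigma2 + (v 2 : ℂ) • sigma3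

/-- Cross product on `ℝ³`. -/
def cross3 (a b : Fin 3 → ℝ) : Fin 3 → ℝ :=
  ![a 1 * b 2 - a 2 * b 1, a 2 * b 0 - a 0 * b 2, a 0 * b 1 - a 1 * b 0]

/-! Factor out the phase: `χ = e^{iρ/2} φ_{n(t)}` with `φ_n = (cos(θ/2), sin(θ/2) e^{iφ})`, so the
Schrödinger equation for `χ` becomes the pointwise identity
`i φ̇_n − (ρ̇/2) φ_n = ½ (C·σ) φ_n`. Since `sin θ ≠ 0`, the precession equation `ṅ = C × n` can be
solved for the angular velocities, `θ̇ = C₂ cos φ − C₁ sin φ` and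
`sin θ φ̇ = C₃ sin θ − cos θ (C₁ cos φ + C₂ sin φ)`; together with
`ρ̇ = −(C·n + (1 − cos θ) φ̇)` and the half-angle formulas this makes both components of the
identity polynomial consequences of `sin² + cos² = 1`. -/

open Real
open Complex (I)

def sphericalUnit (θ φ : ℝ) : Fin 3 → ℝ := ![sin θ * cos φ, sin θ * sin φ, cos θ]

def coherentState (θ φ : ℝ) : Fin 2 → ℂ :=
  ![(cos (θ / 2) : ℂ), (sin (θ / 2) : ℂ) * Complex.exp (I * φ)]

theorem continuous_sphericalUnit {θ φ : ℝ → ℝ} (hθ : Continuous θ) (hφ : Continuous φ) :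
    Continuous fun s => sphericalUnit (θ s) (φ s) := by
  refine continuous_pi fun k => ?_
  fin_cases k <;> simp [sphericalUnit] <;> fun_prop

theorem dotSigma_mulVec (v : Fin 3 → ℝ) (x y : ℂ) :
    (dotSigma v).mulVec ![x, y] =
      ![v 2 * x + (v 0 - I * v 1) * y, (v 0 + I * v 1) * x - v 2 * y] := by
  ext k
  fin_cases k <;>
    simp only [dotSigma, sigma1, sigma2, sigma3, mulVec, dotProduct, Fin.sum_univ_two,
      Matrix.add_apply, Matrix.smul_apply, of_apply, cons_val', cons_val_zero, cons_val_one,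
      cons_val_fin_one, empty_val', Fin.zero_eta, Fin.mk_one, Fin.isValue, smul_eq_mul] <;> ring

theorem precession_spherical {C : Fin 3 → ℝ} {θ φ : ℝ → ℝ} {θ' φ' t : ℝ}
    (hθ : HasDerivAt θ θ' t) (hφ : HasDerivAt φ φ' t) (hsin : sin (θ t) ≠ 0)
    (hprec : ∀ k, HasDerivAt (fun s => sphericalUnit (θ s) (φ s) k)
      (cross3 C (sphericalUnit (θ t) (φ t)) k) t) :
    θ' = C 1 * cos (φ t) - C 0 * sin (φ t) ∧
      sin (θ t) * φ' = C 2 * sin (θ t) - cos (θ t) * (C 0 * cos (φ t) + C 1 * sin (φ t)) := by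
  have h0 := (hθ.sin.mul hφ.cos).unique (hprec 0)
  have h1 := (hθ.sin.mul hφ.sin).unique (hprec 1)
  have h2 := hθ.cos.unique (hprec 2)
  simp only [cross3, sphericalUnit, Matrix.cons_val_zero, Matrix.cons_val_one,
    Matrix.cons_val_two, Matrix.head_cons, Matrix.tail_cons] at h0 h1 h2
  refine ⟨mul_left_cancel₀ hsin ?_, ?_⟩
  · linear_combination -h2
  · linear_combination -sin (φ t) * h0 + cos (φ t) * h1
      + (C 2 * sin (θ t) - sin (θ t) * φ') * sin_sq_add_cos_sq (φ t)

theorem hasDerivAt_coherentState {θ φ : ℝ → ℝ} {θ' φ' t : ℝ}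
    (hθ : HasDerivAt θ θ' t) (hφ : HasDerivAt φ φ' t) :
    HasDerivAt (fun s => coherentState (θ s) (φ s))
      ![-(sin (θ t / 2) * (θ' / 2) : ℂ),
        (cos (θ t / 2) * (θ' / 2) + I * sin (θ t / 2) * φ') * Complex.exp (I * φ t)] t := by
  have hc := ((hθ.div_const 2).cos).ofReal_comp
  have hs := ((hθ.div_const 2).sin).ofReal_comp
  have he := (hφ.ofReal_comp.const_mul I).cexp
  refine hasDerivAt_pi.2 fun k => ?_
  fin_cases k
  · simpa [coherentState] using hc
  · simp only [coherentState, Fin.mk_one, Matrix.cons_val_one, Matrix.cons_val_zero]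
    exact (hs.fun_mul he).congr_deriv (by push_cast; ring)

theorem hasDerivAt_phase_smul {E : Type*} [NormedAddCommGroup E] [NormedSpace ℂ E]
    {f : ℝ → E} {f' : E} {ψ : ℝ → ℝ} {ψ' t : ℝ}
    (hf : HasDerivAt f f' t) (hψ : HasDerivAt ψ ψ' t) :
    HasDerivAt (fun s => Complex.exp (I * ψ s) • f s)
      (Complex.exp (I * ψ t) • (f' + (I * ψ') • f t)) t := by
  convert ((hψ.ofReal_comp.const_mul I).cexp).fun_smul hf using 1
  rw [smul_add, smul_smul, add_comm, mul_comm]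

theorem coherentState_precession (v : Fin 3 → ℝ) {θ φ θ' φ' ρ' : ℝ}
    (hθ' : θ' = v 1 * cos φ - v 0 * sin φ)
    (hφ' : sin θ * φ' = v 2 * sin θ - cos θ * (v 0 * cos φ + v 1 * sin φ))
    (hρ' : ρ' = -((∑ k, v k * sphericalUnit θ φ k) + (1 - cos θ) * φ')) :
    I • ![-(sin (θ / 2) * (θ' / 2) : ℂ),
        (cos (θ / 2) * (θ' / 2) + I * sin (θ / 2) * φ') * Complex.exp (I * φ)]
      - ((ρ' / 2 : ℝ) : ℂ) • coherentState θ φ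
      = (1 / 2 : ℂ) • (dotSigma v).mulVec (coherentState θ φ) := by
  subst hρ'
  have hsin : sin θ = 2 * sin (θ / 2) * cos (θ / 2) := by rw [← sin_two_mul]; ring_nf
  have hcos : cos θ = 2 * cos (θ / 2) ^ 2 - 1 := by rw [← cos_two_mul]; ring_nf
  have hU : Complex.exp (I * φ) = cos φ + I * sin φ := by
    rw [mul_comm, Complex.exp_mul_I, ← Complex.ofReal_cos, ← Complex.ofReal_sin, mul_comm]
  rw [coherentState, dotSigma_mulVec, hU]
  set s := sin (θ / 2)
  set c := cos (θ / 2)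
  set p := cos φ
  set q := sin φ
  set x := v 0 * p + v 1 * q
  set K := (∑ k, v k * sphericalUnit θ φ k) + (1 - cos θ) * φ'
  have hK : K = 2 * s * c * x + (2 * c ^ 2 - 1) * v 2 + (2 - 2 * c ^ 2) * φ' := by
    simp only [K, sphericalUnit, Fin.sum_univ_three, Matrix.cons_val_zero, Matrix.cons_val_one,
      Matrix.cons_val_two, Matrix.head_cons, Matrix.tail_cons, hsin, hcos, x]
    ring
  rw [hsin, hcos] at hφ'
  have R1 : c * K = v 2 * c + s * x := by
    rw [hK]; linear_combination s * hφ' + 2 * c * (v 2 - φ') * sin_sq_add_cos_sq (θ / 2)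
  have R2 : s * K - 2 * s * φ' = x * c - v 2 * s := by
    rw [hK]; linear_combination -c * hφ' + 2 * c * x * sin_sq_add_cos_sq (θ / 2)
  have R1C : (c * K : ℂ) = v 2 * c + s * (v 0 * p + v 1 * q) := by exact_mod_cast R1
  have R2C : (s * K - 2 * s * φ' : ℂ) = (v 0 * p + v 1 * q) * c - v 2 * s := by exact_mod_cast R2
  have hθ'C : (θ' : ℂ) = v 1 * p - v 0 * q := by exact_mod_cast hθ'
  have hpyth : (q : ℂ) ^ 2 + (p : ℂ) ^ 2 = 1 := by exact_mod_cast sin_sq_add_cos_sq φ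
  ext k
  fin_cases k <;>
    simp only [Fin.zero_eta, Fin.mk_one, Fin.isValue, Pi.sub_apply, Pi.smul_apply, smul_cons,
      smul_empty, smul_eq_mul, cons_val_zero, cons_val_one, cons_val_fin_one,
      Complex.ofReal_div, Complex.ofReal_neg, Complex.ofReal_ofNat]
  · linear_combination
      (-I * s / 2) * hθ'C + (1 / 2 : ℂ) * R1C + (s * v 1 * q / 2) * Complex.I_sq
  · linear_combination (I * c * (p + I * q) / 2) * hθ'C + ((p + I * q) / 2) * R2C
      + (s * φ' * (p + I * q)) * Complex.I_sq
      + (c / 2) * ((v 0 + I * v 1) * hpyth + (v 1 * p * q - v 0 * q ^ 2) * Complex.I_sq)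

theorem schrodinger_smul_phase {ι : Type*} [Fintype ι] {H : Matrix ι ι ℂ} {f f' : ι → ℂ}
    {ψ' : ℝ} (e : ℂ) (h : I • f' - (ψ' : ℂ) • f = (1 / 2 : ℂ) • H.mulVec f) :
    I • (e • (f' + (I * ψ') • f)) = (1 / 2 : ℂ) • H.mulVec (e • f) := by
  rw [mulVec_smul, smul_comm (1 / 2 : ℂ) e, ← h, smul_comm I e, smul_add, smul_smul,
    ← mul_assoc, Complex.I_mul_I, neg_one_mul, neg_smul, ← sub_eq_add_neg]

theorem spin_phase_general (C : ℝ → Fin 3 → ℝ) (hC : Continuous fun t => C t)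
    (θ φ θ' φ' : ℝ → ℝ)
    (hθ : ∀ t, HasDerivAt θ (θ' t) t) (hφ : ∀ t, HasDerivAt φ (φ' t) t)
    (hφ'c : Continuous φ')
    (hrange : ∀ t, θ t ∈ Set.Ioo 0 Real.pi)
    (n : ℝ → Fin 3 → ℝ)
    (hn : n = fun t => ![Real.sin (θ t) * Real.cos (φ t),
      Real.sin (θ t) * Real.sin (φ t), Real.cos (θ t)])
    (hprec : ∀ t k, HasDerivAt (fun s => n s k) (cross3 (C t) (n t) k) t)
    (ρ : ℝ → ℝ)
    (hρ : ρ = fun t => -∫ s in (0 : ℝ)..t,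
      ((∑ k, C s k * n s k) + (1 - Real.cos (θ s)) * φ' s))
    (χ : ℝ → Fin 2 → ℂ)
    (hχ : χ = fun t => ![(Real.cos (θ t / 2) : ℂ) * Complex.exp (Complex.I * (ρ t / 2 : ℝ)),
      (Real.sin (θ t / 2) : ℂ) * Complex.exp (Complex.I * ((φ t + ρ t / 2 : ℝ) : ℂ))]) :
    ∀ t, ∃ χd : Fin 2 → ℂ,
      (∀ k, HasDerivAt (fun s => χ s k) (χd k) t) ∧
      Complex.I • χd = (1 / 2 : ℂ) • (dotSigma (C t)).mulVec (χ t) := by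
  intro t
  subst hn
  have hθc : Continuous θ := continuous_iff_continuousAt.2 fun s => (hθ s).continuousAt
  have hφc : Continuous φ := continuous_iff_continuousAt.2 fun s => (hφ s).continuousAt
  have hρ' : HasDerivAt ρ (-((∑ k, C t k * sphericalUnit (θ t) (φ t) k)
      + (1 - cos (θ t)) * φ' t)) t := by
    have hintegrand : Continuous fun s =>
        (C s ⬝ᵥ sphericalUnit (θ s) (φ s)) + (1 - cos (θ s)) * φ' s :=
      (hC.dotProduct (continuous_sphericalUnit hθc hφc)).add (by fun_prop)
    rw [hρ]
    exact (hintegrand.integral_hasStrictDerivAt 0 t).hasDerivAt.neg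
  obtain ⟨hθ't, hφ't⟩ := precession_spherical (hθ t) (hφ t)
    (sin_pos_of_pos_of_lt_pi (hrange t).1 (hrange t).2).ne' (hprec t)
  have hχ_eq : χ = fun s => Complex.exp (I * (ρ s / 2 : ℝ)) • coherentState (θ s) (φ s) := by
    rw [hχ]
    ext s k
    fin_cases k <;> simp [coherentState, mul_add, Complex.exp_add] <;> ring
  rw [hχ_eq]
  exact ⟨_, hasDerivAt_pi.1 (hasDerivAt_phase_smul (hasDerivAt_coherentState (hθ t) (hφ t))
    (hρ'.div_const 2)), schrodinger_smul_phase _ (coherentState_precession (C t) hθ't hφ't rfl)⟩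

/-- Explicit phase of the propagated spin-coherent state (spin 1/2): if
`n(t) = n(θ(t),φ(t))` solves the precession equation `ṅ = C × n` and
`ρ(t) = −∫₀ᵗ (C·n + (1 − cos θ)φ̇) dt′`, then
`χ(t) = (cos(θ/2) e^{iρ/2}, sin(θ/2) e^{i(φ+ρ/2)})` solves `i χ̇ = (1/2)(C·σ)χ`;
i.e. the quantum evolution of `φ_{n(0)}` equals `e^{iρ(t)/2} φ_{n(t)}`. -/
theorem spin_phase (C : ℝ → Fin 3 → ℝ) (hC : Continuous fun t => C t)
    (θ φ θ' φ' : ℝ → ℝ)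
    (hθ : ∀ t, HasDerivAt θ (θ' t) t) (hφ : ∀ t, HasDerivAt φ (φ' t) t)
    (hθ'c : Continuous θ') (hφ'c : Continuous φ')
    (hrange : ∀ t, θ t ∈ Set.Ioo 0 Real.pi)
    (n : ℝ → Fin 3 → ℝ)
    (hn : n = fun t => ![Real.sin (θ t) * Real.cos (φ t),
      Real.sin (θ t) * Real.sin (φ t), Real.cos (θ t)])
    (hprec : ∀ t k, HasDerivAt (fun s => n s k) (cross3 (C t) (n t) k) t)
    (ρ : ℝ → ℝ)
    (hρ : ρ = fun t => -∫ s in (0 : ℝ)..t,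
      ((∑ k, C s k * n s k) + (1 - Real.cos (θ s)) * φ' s))
    (χ : ℝ → Fin 2 → ℂ)
    (hχ : χ = fun t => ![(Real.cos (θ t / 2) : ℂ) * Complex.exp (Complex.I * (ρ t / 2 : ℝ)),
      (Real.sin (θ t / 2) : ℂ) * Complex.exp (Complex.I * ((φ t + ρ t / 2 : ℝ) : ℂ))]) :
    ∀ t, ∃ χd : Fin 2 → ℂ,
      (∀ k, HasDerivAt (fun s => χ s k) (χd k) t) ∧
      Complex.I • χd = (1 / 2 : ℂ) • (dotSigma (C t)).mulVec (χ t) :=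
  spin_phase_general C hC θ φ θ' φ' hθ hφ hφ'c hrange n hn hprec ρ hρ χ hχ
end
end
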